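/- arXiv:1106.2013 — 2 statements merged into one kernel-verified Lean document; each statement's English description precedes it below -/
import Mathlib

section
/- Let J be a random variable uniformly distributed on a finite set 𝒥 of size J_n, and let Z be a random variable on a finite set C jointly distributed with J such that the total variation distance between the joint distribution p_{JZ} and the product p_J ⊗ p_Z is at most δ. Then for any family of mutually disjoint decoding sets {K_j ⊆ C : j ∈ 𝒥}, the average probability of correct decoding (1/J_n) ∑_j p_{JZ}({j} × K_j) is at most 1/J_n + δ. Equivalently, the average error probability is at least 1 - 1/J_n - δ. -/
/-!
Bound the joint mass of each `{j} × K j` by that of the product distribution plus the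
total-variation error. Under the product distribution the output is independent of the
message, so disjoint decoding sets together collect at most the output mass `1/J_n`.
-/

open Finset

section

variable {ι α M : Type*}

theorem Finset.sum_sum_le_sum_of_pairwise_disjoint [Fintype α] [AddCommMonoid M]
    [PartialOrder M] [IsOrderedAddMonoid M] {s : Finset ι} {K : ι → Finset α}
    (hK : Pairwise fun i j => Disjoint (K i) (K j)) {f : α → M} (hf : ∀ z, 0 ≤ f z) :
    ∑ j ∈ s, ∑ z ∈ K j, f z ≤ ∑ z, f z := by
  classical
  rw [← sum_biUnion fun i _ j _ hij => hK hij]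
  exact sum_le_univ_sum_of_nonneg hf

theorem Finset.sum_le_sum_add_sum_abs_sub [Fintype α] [AddCommGroup M] [LinearOrder M]
    [IsOrderedAddMonoid M] (s : Finset α) (f g : α → M) :
    ∑ z ∈ s, f z ≤ ∑ z ∈ s, g z + ∑ z, |f z - g z| := calc
  ∑ z ∈ s, f z ≤ ∑ z ∈ s, (g z + |f z - g z|) :=
    sum_le_sum fun z _ => sub_le_iff_le_add'.mp (le_abs_self _)
  _ ≤ ∑ z ∈ s, g z + ∑ z, |f z - g z| := by
    rw [sum_add_distrib]
    exact add_le_add_right (sum_le_univ_sum_of_nonneg fun z => abs_nonneg _) _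

end

/-- If the joint distribution of a uniformly distributed message `J` and the eavesdropper's
output `Z` is `δ`-close in total variation to the product of its marginals, then for any
disjoint decoding sets the probability of correct decoding is at most `1/J_n + δ`;
equivalently the average error probability is at least `1 - 1/J_n - δ`. -/
theorem eavesdropper_decoding_error {J C : Type*} [Fintype J] [Nonempty J]
    [Fintype C] [DecidableEq C]
    (p : J → C → ℝ) (hp0 : ∀ j z, 0 ≤ p j z)
    (hunif : ∀ j, ∑ z, p j z = 1 / (Fintype.card J : ℝ))
    (δ : ℝ)
    (hTV : ∑ j, ∑ z, |p j z - (1 / (Fintype.card J : ℝ)) * (∑ i, p i z)| ≤ δ)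
    (K : J → Finset C) (hK : Pairwise fun i j => Disjoint (K i) (K j)) :
    (∑ j, ∑ z ∈ K j, p j z ≤ 1 / (Fintype.card J : ℝ) + δ) ∧
    (1 - 1 / (Fintype.card J : ℝ) - δ ≤ ∑ j, ∑ z ∈ (K j)ᶜ, p j z) := by
  set n : ℝ := (Fintype.card J : ℝ)
  have hmass : ∑ j, ∑ z, p j z = 1 := by
    simp only [hunif, sum_const, card_univ, nsmul_eq_mul]
    exact mul_one_div_cancel (by positivity)
  have hcorrect : ∑ j, ∑ z ∈ K j, p j z ≤ 1 / n + δ := calc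
    ∑ j, ∑ z ∈ K j, p j z
        ≤ ∑ j, (∑ z ∈ K j, 1 / n * ∑ i, p i z + ∑ z, |p j z - 1 / n * ∑ i, p i z|) :=
      sum_le_sum fun j _ => sum_le_sum_add_sum_abs_sub _ _ _
    _ ≤ ∑ z, 1 / n * ∑ i, p i z + δ := by
      rw [sum_add_distrib]
      refine add_le_add (sum_sum_le_sum_of_pairwise_disjoint hK fun z => ?_) hTV
      exact mul_nonneg (by positivity) (sum_nonneg fun i _ => hp0 i z)
    _ = 1 / n + δ := by rw [← mul_sum, sum_comm, hmass, mul_one]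
  have herror : ∑ j, ∑ z ∈ (K j)ᶜ, p j z = 1 - ∑ j, ∑ z ∈ K j, p j z := by
    rw [← hmass, ← sum_sub_distrib]
    exact sum_congr rfl fun j _ => eq_sub_of_add_eq (sum_compl_add_sum (K j) (p j))
  exact ⟨hcorrect, by linarith⟩
end

section
/- Let A, B, C be finite sets, W : A → P(B) a channel, D : B → P(C) a channel, and V = W ∘ D the degraded channel, i.e., V(z|x) = ∑_y W(y|x)·D(z|y). For an input distribution p on A, let (X,Y,Z) have joint distribution p(x)W(y|x)D(z|y). Then the conditional mutual information I(X;Y|Z) is a concave function of the input distribution p. -/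
/-- Shannon entropy (natural log) of a function on a finite set. -/
noncomputable def ent {S : Type*} [Fintype S] (f : S → ℝ) : ℝ := ∑ s, Real.negMulLog (f s)

/-- Conditional mutual information `I(X;Y|Z) = H(XZ) + H(YZ) - H(XYZ) - H(Z)` for the joint
distribution `p(x) W(y|x) D(z|y)` of the degraded wiretap channel. -/
noncomputable def cmi {A B C : Type*} [Fintype A] [Fintype B] [Fintype C]
    (p : A → ℝ) (W : A → B → ℝ) (D : B → C → ℝ) : ℝ :=
  ent (fun xz : A × C => ∑ y, p xz.1 * W xz.1 y * D y xz.2)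
    + ent (fun yz : B × C => ∑ x, p x * W x yz.1 * D yz.1 yz.2)
    - ent (fun xyz : A × B × C => p xyz.1 * W xyz.1 xyz.2.1 * D xyz.2.1 xyz.2.2)
    - ent (fun z : C => ∑ x, ∑ y, p x * W x y * D y z)

/-!
`I(X;Y|Z) = H(Y|Z) - H(Y|X,Z)`. The joint law of `(Z, Y)` is linear in `p`, and conditional
entropy is concave in the joint mass function: each summand `a log (b / a)` is the perspective
`b * negMulLog (a / b)` of the concave function `negMulLog`, hence homogeneous and superadditive
(the log-sum inequality). Given `X = x`, the law of `(Y, Z)` is `W(y|x) D(z|y)`, which does not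
depend on `p`, so `H(Y|X,Z) = ∑ₓ p(x) H(Y|Z, X = x)` is linear in `p`.
-/

open Real Finset

/-- The summand `a log (b / a)` of a conditional entropy, for a joint mass `a` whose marginal
mass is `b`. -/
noncomputable def condEntTerm (a b : ℝ) : ℝ := negMulLog a + a * log b

lemma condEntTerm_eq_mul_negMulLog (a : ℝ) {b : ℝ} (hb : b ≠ 0) :
    condEntTerm a b = b * negMulLog (a / b) := by
  have h := negMulLog_mul b (a / b)
  have hb' : a / b * negMulLog b = -(a * log b) := by
    rw [negMulLog]
    field_simp
  rw [mul_div_cancel₀ a hb, hb'] at h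
  rw [condEntTerm, h]
  ring

lemma condEntTerm_mul {c a b : ℝ} (hc : 0 ≤ c) (ha : 0 ≤ a) (hab : a ≤ b) :
    condEntTerm (c * a) (c * b) = c * condEntTerm a b := by
  rcases hc.eq_or_lt with rfl | hc
  · simp [condEntTerm]
  rcases (ha.trans hab).eq_or_lt with rfl | hb
  · obtain rfl : a = 0 := le_antisymm hab ha
    simp [condEntTerm]
  rw [condEntTerm_eq_mul_negMulLog _ (by positivity), condEntTerm_eq_mul_negMulLog _ hb.ne',
    mul_div_mul_left _ _ hc.ne', mul_assoc]

lemma condEntTerm_add_le {a₁ b₁ a₂ b₂ : ℝ} (ha₁ : 0 ≤ a₁) (hab₁ : a₁ ≤ b₁)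
    (ha₂ : 0 ≤ a₂) (hab₂ : a₂ ≤ b₂) :
    condEntTerm a₁ b₁ + condEntTerm a₂ b₂ ≤ condEntTerm (a₁ + a₂) (b₁ + b₂) := by
  rcases (ha₁.trans hab₁).eq_or_lt with rfl | hb₁
  · obtain rfl : a₁ = 0 := le_antisymm hab₁ ha₁
    simp [condEntTerm]
  rcases (ha₂.trans hab₂).eq_or_lt with rfl | hb₂
  · obtain rfl : a₂ = 0 := le_antisymm hab₂ ha₂
    simp [condEntTerm]
  have hb : 0 < b₁ + b₂ := by positivity
  rw [condEntTerm_eq_mul_negMulLog _ hb₁.ne', condEntTerm_eq_mul_negMulLog _ hb₂.ne',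
    condEntTerm_eq_mul_negMulLog _ hb.ne']
  have hconc := concaveOn_negMulLog.2 (Set.mem_Ici.2 (div_nonneg ha₁ hb₁.le))
    (Set.mem_Ici.2 (div_nonneg ha₂ hb₂.le)) (div_nonneg hb₁.le hb.le) (div_nonneg hb₂.le hb.le)
    (by rw [← add_div, div_self hb.ne'])
  have hmix :
      (b₁ / (b₁ + b₂)) • (a₁ / b₁) + (b₂ / (b₁ + b₂)) • (a₂ / b₂) = (a₁ + a₂) / (b₁ + b₂) := by
    simp only [smul_eq_mul]
    field_simp
  rw [hmix, smul_eq_mul, smul_eq_mul] at hconc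
  calc b₁ * negMulLog (a₁ / b₁) + b₂ * negMulLog (a₂ / b₂)
      = (b₁ + b₂) * (b₁ / (b₁ + b₂) * negMulLog (a₁ / b₁)
          + b₂ / (b₁ + b₂) * negMulLog (a₂ / b₂)) := by field_simp
    _ ≤ (b₁ + b₂) * negMulLog ((a₁ + a₂) / (b₁ + b₂)) :=
        mul_le_mul_of_nonneg_left hconc hb.le

lemma concaveOn_condEntTerm :
    ConcaveOn ℝ {x : ℝ × ℝ | 0 ≤ x.1 ∧ x.1 ≤ x.2} (fun x => condEntTerm x.1 x.2) := by
  refine ⟨?_, ?_⟩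
  · rintro x ⟨hx₀, hx⟩ y ⟨hy₀, hy⟩ s t hs ht -
    exact ⟨by simp only [Prod.fst_add, Prod.smul_fst, smul_eq_mul]; positivity,
      by simp only [Prod.fst_add, Prod.snd_add, Prod.smul_fst, Prod.smul_snd, smul_eq_mul]
         gcongr⟩
  · rintro x ⟨hx₀, hx⟩ y ⟨hy₀, hy⟩ s t hs ht -
    calc s • condEntTerm x.1 x.2 + t • condEntTerm y.1 y.2
        = condEntTerm (s * x.1) (s * x.2) + condEntTerm (t * y.1) (t * y.2) := by
          rw [condEntTerm_mul hs hx₀ hx, condEntTerm_mul ht hy₀ hy, smul_eq_mul, smul_eq_mul]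
      _ ≤ condEntTerm (s * x.1 + t * y.1) (s * x.2 + t * y.2) :=
          condEntTerm_add_le (by positivity) (by gcongr) (by positivity) (by gcongr)

section CondEnt

variable {ι κ : Type*} [Fintype ι] [Fintype κ]

/-- The conditional entropy `H(K | I)` of the joint mass function `g i k`. -/
noncomputable def condEnt (g : ι → κ → ℝ) : ℝ := ∑ i, ∑ k, condEntTerm (g i k) (∑ k', g i k')

lemma ent_comp_equiv {S T : Type*} [Fintype S] [Fintype T] (e : S ≃ T) (f : T → ℝ) :
    ent (fun s => f (e s)) = ent f :=
  e.sum_comp (fun t => negMulLog (f t))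

lemma ent_prod_eq_ent_add_condEnt (g : ι → κ → ℝ) :
    ent (fun x : ι × κ => g x.1 x.2) = ent (fun i => ∑ k, g i k) + condEnt g := by
  simp only [ent, condEnt, condEntTerm, Fintype.sum_prod_type, ← sum_add_distrib]
  refine sum_congr rfl fun i _ => ?_
  rw [sum_add_distrib, ← sum_mul, negMulLog]
  ring

lemma concaveOn_condEnt : ConcaveOn ℝ (Set.Ici 0) (condEnt (ι := ι) (κ := κ)) := by
  refine ⟨convex_Ici 0, fun g hg h hh s t hs ht hst => ?_⟩
  have hmem : ∀ g : ι → κ → ℝ, 0 ≤ g → ∀ i k,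
      (g i k, ∑ k', g i k') ∈ {x : ℝ × ℝ | 0 ≤ x.1 ∧ x.1 ≤ x.2} := fun g hg i k =>
    ⟨hg i k, single_le_sum (fun k' _ => hg i k') (mem_univ k)⟩
  simp only [condEnt, smul_eq_mul, mul_sum, ← sum_add_distrib]
  gcongr with i _ k _
  convert concaveOn_condEntTerm.2 (hmem g hg i k) (hmem h hh i k) hs ht hst using 2 <;>
    simp [sum_add_distrib, mul_sum]

lemma condEnt_mul_left {c : ι → ℝ} {g : ι → κ → ℝ} (hc : 0 ≤ c) (hg : 0 ≤ g) :
    condEnt (fun i k => c i * g i k) = ∑ i, c i * ∑ k, condEntTerm (g i k) (∑ k', g i k') := by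
  simp only [condEnt, mul_sum]
  refine sum_congr rfl fun i _ => sum_congr rfl fun k _ => ?_
  rw [← mul_sum]
  exact condEntTerm_mul (hc i) (hg i k) (single_le_sum (fun k' _ => hg i k') (mem_univ k))

end CondEnt

section DegradedChannel

variable {A B C : Type*} [Fintype A] [Fintype B] [Fintype C]

lemma cmi_eq_condEnt_sub_condEnt (p : A → ℝ) (W : A → B → ℝ) (D : B → C → ℝ) :
    cmi p W D = condEnt (fun z y => ∑ x, p x * W x y * D y z)
      - condEnt (fun (xz : A × C) y => p xz.1 * (W xz.1 y * D y xz.2)) := by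
  have hXYZ : ent (fun xyz : A × B × C => p xyz.1 * W xyz.1 xyz.2.1 * D xyz.2.1 xyz.2.2)
      = ent (fun xz : A × C => ∑ y, p xz.1 * W xz.1 y * D y xz.2)
        + condEnt (fun (xz : A × C) y => p xz.1 * (W xz.1 y * D y xz.2)) := by
    let e : (A × C) × B ≃ A × B × C :=
      (Equiv.prodAssoc A C B).trans (Equiv.prodCongr (Equiv.refl A) (Equiv.prodComm C B))
    refine (ent_comp_equiv e _).symm.trans ((ent_prod_eq_ent_add_condEnt
      (fun (xz : A × C) y => p xz.1 * W xz.1 y * D y xz.2)).trans ?_)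
    simp only [mul_assoc]
  have hYZ : ent (fun yz : B × C => ∑ x, p x * W x yz.1 * D yz.1 yz.2)
      = ent (fun z : C => ∑ x, ∑ y, p x * W x y * D y z)
        + condEnt (fun z y => ∑ x, p x * W x y * D y z) := by
    refine (ent_comp_equiv (Equiv.prodComm C B) _).symm.trans
      ((ent_prod_eq_ent_add_condEnt (fun z y => ∑ x, p x * W x y * D y z)).trans ?_)
    congr 2
    funext z
    exact sum_comm
  rw [cmi, hXYZ, hYZ]
  ring

def jointZY (W : A → B → ℝ) (D : B → C → ℝ) : (A → ℝ) →ₗ[ℝ] C → B → ℝ where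
  toFun p z y := ∑ x, p x * W x y * D y z
  map_add' p q := by
    ext z y
    simp [add_mul, sum_add_distrib]
  map_smul' c p := by
    ext z y
    simp [mul_sum, mul_assoc]

theorem concaveOn_cmi {W : A → B → ℝ} (hW0 : ∀ a b, 0 ≤ W a b) {D : B → C → ℝ}
    (hD0 : ∀ b c, 0 ≤ D b c) : ConcaveOn ℝ (Set.Ici 0) (fun p : A → ℝ => cmi p W D) := by
  let K : A × C → ℝ := fun xz =>
    ∑ y, condEntTerm (W xz.1 y * D y xz.2) (∑ y', W xz.1 y' * D y' xz.2)
  let M : (A → ℝ) →ₗ[ℝ] ℝ := Fintype.linearCombination ℝ K ∘ₗ LinearMap.funLeft ℝ ℝ Prod.fst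
  have hH : ConcaveOn ℝ (Set.Ici 0) (fun p => condEnt (jointZY W D p)) :=
    (concaveOn_condEnt.comp_linearMap (jointZY W D)).subset
      (fun p hp z y => sum_nonneg fun x _ => mul_nonneg (mul_nonneg (hp x) (hW0 x y)) (hD0 y z))
      (convex_Ici 0)
  refine (hH.sub (M.convexOn (convex_Ici 0))).congr fun p hp => ?_
  rw [cmi_eq_condEnt_sub_condEnt, condEnt_mul_left (c := fun xz : A × C => p xz.1)
    (fun xz => hp xz.1) (fun xz y => mul_nonneg (hW0 _ _) (hD0 _ _))]
  simp [M, K, jointZY, Fintype.linearCombination_apply, LinearMap.funLeft_apply]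

end DegradedChannel

theorem cmi_concave_in_input_general {A B C : Type*} [Fintype A] [Fintype B] [Fintype C]
    (W : A → B → ℝ) (hW0 : ∀ a b, 0 ≤ W a b)
    (D : B → C → ℝ) (hD0 : ∀ b c, 0 ≤ D b c)
    (p q : A → ℝ) (hp0 : ∀ a, 0 ≤ p a)
    (hq0 : ∀ a, 0 ≤ q a)
    (t : ℝ) (ht : t ∈ Set.Icc (0:ℝ) 1) :
    t * cmi p W D + (1 - t) * cmi q W D ≤
      cmi (fun a => t * p a + (1 - t) * q a) W D :=
  (concaveOn_cmi hW0 hD0).2 hp0 hq0 ht.1 (sub_nonneg.2 ht.2) (by ring)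

/-- For a degraded channel, `I(X;Y|Z)` is concave in the input distribution. -/
theorem cmi_concave_in_input {A B C : Type*} [Fintype A] [Fintype B] [Fintype C]
    (W : A → B → ℝ) (hW0 : ∀ a b, 0 ≤ W a b) (hW1 : ∀ a, ∑ b, W a b = 1)
    (D : B → C → ℝ) (hD0 : ∀ b c, 0 ≤ D b c) (hD1 : ∀ b, ∑ c, D b c = 1)
    (p q : A → ℝ) (hp0 : ∀ a, 0 ≤ p a) (hp1 : ∑ a, p a = 1)
    (hq0 : ∀ a, 0 ≤ q a) (hq1 : ∑ a, q a = 1)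
    (t : ℝ) (ht : t ∈ Set.Icc (0:ℝ) 1) :
    t * cmi p W D + (1 - t) * cmi q W D ≤
      cmi (fun a => t * p a + (1 - t) * q a) W D :=
  cmi_concave_in_input_general W hW0 D hD0 p q hp0 hq0 t ht
end
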